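/- Suppose T_Z is invertible with ‖T_Z^{−1}‖ the operator norm of its inverse, and ‖A(m,n)x‖_m ≤ M(m/n)^a‖x‖_n for m ≥ n. Then with L = max{M 2^a, M 2^{a+1}‖T_Z^{−1}‖}, for all m ≥ n and x ∈ X(n): ‖A(m,n)x‖_m ≤ L ‖x‖_n. -/

import Mathlib

open scoped BigOperators

variable {X : Type*} [NormedAddCommGroup X] [NormedSpace ℝ X]

/-- The cocycle generated by a sequence of bounded operators:
`coc A n m = 𝓐(m,n) = A_{m-1} ⋯ A_n` for `m > n`, and `= Id` for `m ≤ n`. -/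
def coc (A : ℕ → X →L[ℝ] X) (n : ℕ) : ℕ → X →L[ℝ] X
  | 0 => 1
  | m + 1 => if n ≤ m then (A m).comp (coc A n m) else 1

/-- The formal difference operator: `(T x)_1 = 0` and
`(T x)_{m+1} = (m+1)(x_{m+1} - A_m x_m)` for `m ≥ 1`. -/
noncomputable def TOp (A : ℕ → X →L[ℝ] X) (x : ℕ → X) : ℕ → X :=
  fun m => if m ≤ 1 then 0 else (m : ℝ) • (x m - A (m - 1) (x (m - 1)))

/-- `N` is a family (indexed by `m ≥ 1`) of norms on `X`, each equivalent to `‖·‖`. -/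
def NormFamily (N : ℕ → X → ℝ) : Prop :=
  ∀ m, 1 ≤ m →
    (∀ x y : X, N m (x + y) ≤ N m x + N m y) ∧
    (∀ (c : ℝ) (x : X), N m (c • x) = |c| * N m x) ∧
    (∃ c C : ℝ, 0 < c ∧ ∀ x : X, c * ‖x‖ ≤ N m x ∧ N m x ≤ C * ‖x‖)

/-- Membership in `Y`: `sup_{m ≥ 1} ‖x_m‖_m < ∞`. -/
def MemY (N : ℕ → X → ℝ) (x : ℕ → X) : Prop :=
  ∃ S : ℝ, ∀ m, 1 ≤ m → N m (x m) ≤ S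

/-- Membership in `Y₀ = Y_{{0}}`: bounded and `x_1 = 0`. -/
def MemY0 (N : ℕ → X → ℝ) (x : ℕ → X) : Prop := x 1 = 0 ∧ MemY N x

/-- Membership in `Y_Z`: bounded and `x_1 ∈ Z`. -/
def MemYZ (N : ℕ → X → ℝ) (Z : Set X) (x : ℕ → X) : Prop := x 1 ∈ Z ∧ MemY N x

/-- Membership in the domain `𝒟(T_Z)`: `x ∈ Y_Z` and
`sup_{m ≥ 1} (m+1)‖x_{m+1} - A_m x_m‖_{m+1} < ∞`. -/
def MemD (A : ℕ → X →L[ℝ] X) (N : ℕ → X → ℝ) (Z : Set X) (x : ℕ → X) : Prop :=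
  MemYZ N Z x ∧ MemY N (TOp A x)

/-- Polynomial dichotomy (with given projections and constants) with respect to the
sequence of norms `N`.  The bound along the unstable direction is stated in the
equivalent "forward" form: `‖u‖_m ≤ D (m/n)^λ ‖𝓐(n,m)u‖_n` for `u ∈ Ker P_m`, `m ≤ n`. -/
def PolyDichWith (A : ℕ → X →L[ℝ] X) (N : ℕ → X → ℝ) (P : ℕ → X →L[ℝ] X)
    (D lam : ℝ) : Prop :=
  (∀ m, 1 ≤ m → (P m).comp (P m) = P m) ∧
  (∀ m, 1 ≤ m → (A m).comp (P m) = (P (m + 1)).comp (A m)) ∧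
  (∀ m, 1 ≤ m → ∀ y, P (m + 1) y = 0 → ∃! x, P m x = 0 ∧ A m x = y) ∧
  (∀ m n, 1 ≤ n → n ≤ m → ∀ x : X,
      N m (coc A n m (P n x)) ≤ D * (((m : ℝ) / (n : ℝ)) ^ (-lam)) * N n x) ∧
  (∀ m n, 1 ≤ m → m ≤ n → ∀ u : X, P m u = 0 →
      N m u ≤ D * (((m : ℝ) / (n : ℝ)) ^ lam) * N n (coc A m n u))

/-- `(A_m)` admits a polynomial dichotomy with respect to the sequence of norms `N`. -/
def PolyDich (A : ℕ → X →L[ℝ] X) (N : ℕ → X → ℝ) : Prop :=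
  ∃ (P : ℕ → X →L[ℝ] X) (D lam : ℝ), 0 < D ∧ 0 < lam ∧ PolyDichWith A N P D lam

/-- The stable space `X(n) = {x : sup_{m ≥ n} ‖𝓐(m,n)x‖_m < ∞}`. -/
def Xs (A : ℕ → X →L[ℝ] X) (N : ℕ → X → ℝ) (n : ℕ) : Set X :=
  {x : X | ∃ S : ℝ, ∀ m, n ≤ m → N m (coc A n m x) ≤ S}

/-- The unstable space `Z(n) = 𝓐(n,1) Z`. -/
def Zs (A : ℕ → X →L[ℝ] X) (Z : Set X) (n : ℕ) : Set X := coc A 1 n '' Z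

/-- `T_Z : 𝒟(T_Z) → Y₀` is invertible, with `κ` a bound for the norm of its inverse
(with respect to the graph norm on the domain). -/
def TInv (A : ℕ → X →L[ℝ] X) (N : ℕ → X → ℝ) (Z : Set X) (κ : ℝ) : Prop :=
  (∀ y, MemY0 N y → ∃ x, MemD A N Z x ∧ ∀ m, 1 ≤ m → TOp A x m = y m) ∧
  (∀ x x', MemD A N Z x → MemD A N Z x' →
      (∀ m, 1 ≤ m → TOp A x m = TOp A x' m) → ∀ m, 1 ≤ m → x m = x' m) ∧
  (∀ y x, MemY0 N y → MemD A N Z x → (∀ m, 1 ≤ m → TOp A x m = y m) →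
      ∀ S : ℝ, (∀ m, 1 ≤ m → N m (y m) ≤ S) → ∀ m, 1 ≤ m → N m (x m) ≤ κ * S)

/-- The uniform polynomial growth bound `‖𝓐(m,n)x‖_m ≤ M (m/n)^a ‖x‖_n` for `m ≥ n`. -/
def Grow (A : ℕ → X →L[ℝ] X) (N : ℕ → X → ℝ) (M a : ℝ) : Prop :=
  ∀ m n, 1 ≤ n → n ≤ m → ∀ x : X,
    N m (coc A n m x) ≤ M * (((m : ℝ) / (n : ℝ)) ^ a) * N n x

/-!
Apart from the easy range `m ≤ 2n`, where the growth bound gives `M 2^a` directly, one tests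
`T_Z⁻¹` against the rescaled orbit `x̂_k = s_k 𝓐(k,n)x` with `s_k = ∑_{j=n+1}^{min(k,m)} 1/(j‖𝓐(j,n)x‖_j)`.
Its image `T x̂` has norm `1` in `Y₀`, while `x̂` is bounded because `x ∈ X(n)`, so
`‖𝓐(m,n)x‖_m · s_m ≤ κ`. The first `n` terms of `s_m` are each at least
`1/(2n · M 2^a ‖x‖_n)`, whence `s_m ≥ 1/(M 2^{a+1} ‖x‖_n)`.
-/

open Finset

namespace NormFamily

variable {N : ℕ → X → ℝ} (hN : NormFamily N) {m : ℕ} (hm : 1 ≤ m)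
include hN hm

lemma smul (c : ℝ) (y : X) : N m (c • y) = |c| * N m y := (hN m hm).2.1 c y

lemma map_zero : N m 0 = 0 := by simpa using hN.smul hm 0 0

lemma nonneg (y : X) : 0 ≤ N m y := by
  obtain ⟨c, C, hc, hcC⟩ := (hN m hm).2.2
  exact (mul_nonneg hc.le (norm_nonneg y)).trans (hcC y).1

lemma pos {y : X} (hy : y ≠ 0) : 0 < N m y := by
  obtain ⟨c, C, hc, hcC⟩ := (hN m hm).2.2
  exact (mul_pos hc (norm_pos_iff.2 hy)).trans_le (hcC y).1

end NormFamily

section Cocycle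

variable (A : ℕ → X →L[ℝ] X)

lemma coc_of_le {n k : ℕ} (h : k ≤ n) : coc A n k = 1 := by
  induction k with
  | zero => rfl
  | succ j ih => rw [coc, if_neg (by omega)]

lemma coc_self (n : ℕ) : coc A n n = 1 := coc_of_le A le_rfl

lemma coc_succ {n k : ℕ} (h : n ≤ k) : coc A n (k + 1) = (A k).comp (coc A n k) := by
  rw [coc, if_pos h]

lemma coc_comp {n j m : ℕ} (hnj : n ≤ j) (hjm : j ≤ m) :
    coc A n m = (coc A j m).comp (coc A n j) := by
  induction m, hjm using Nat.le_induction with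
  | base => rw [coc_self]; rfl
  | succ m hm ih => rw [coc_succ A (hnj.trans hm), coc_succ A hm, ih]; rfl

lemma coc_apply_ne_zero_of_le {n j m : ℕ} {x : X} (hx : coc A n m x ≠ 0) (hnj : n ≤ j)
    (hjm : j ≤ m) : coc A n j x ≠ 0 := by
  intro h
  rw [coc_comp A hnj hjm, ContinuousLinearMap.comp_apply, h, _root_.map_zero] at hx
  exact hx rfl

end Cocycle

lemma TOp_sum_smul_coc (A : ℕ → X →L[ℝ] X) {n : ℕ} (hn : 1 ≤ n) (x : X) (c : ℕ → ℝ) (k : ℕ) :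
    TOp A (fun k => (∑ j ∈ Ioc n k, c j) • coc A n k x) k =
      if n < k then ((k : ℝ) * c k) • coc A n k x else 0 := by
  unfold TOp
  split_ifs with hk hnk
  · omega
  · rfl
  · obtain ⟨j, rfl⟩ : ∃ j, k = j + 1 := ⟨k - 1, by omega⟩
    have hnj : n ≤ j := by omega
    simp only [Nat.add_sub_cancel, sum_Ioc_succ_top hnj, coc_succ A hnj, map_smul,
      ContinuousLinearMap.comp_apply, add_smul, add_sub_cancel_left, smul_smul]
  · simp [Ioc_eq_empty_of_le (show k ≤ n by omega), Ioc_eq_empty_of_le (show k - 1 ≤ n by omega)]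

lemma Grow.le_of_le_two_mul {A : ℕ → X →L[ℝ] X} {N : ℕ → X → ℝ} {M a : ℝ}
    (hgrow : Grow A N M a) (hN : NormFamily N) (hM : 0 ≤ M) (ha : 0 ≤ a) {m n : ℕ}
    (hn : 1 ≤ n) (hnm : n ≤ m) (hm : m ≤ 2 * n) (x : X) :
    N m (coc A n m x) ≤ M * 2 ^ a * N n x := by
  refine (hgrow m n hn hnm x).trans ?_
  have hmn : (m : ℝ) / n ≤ 2 := by
    rw [div_le_iff₀ (by positivity)]
    exact_mod_cast hm
  have := hN.nonneg hn x
  gcongr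

lemma inv_two_mul_le_sum_inv {b : ℕ → ℝ} {B : ℝ} {n m : ℕ} (hn : 1 ≤ n) (hm : 2 * n ≤ m)
    (hpos : ∀ j ∈ Ioc n m, 0 < b j) (hle : ∀ j ∈ Ioc n (2 * n), b j ≤ B) :
    (2 * B)⁻¹ ≤ ∑ j ∈ Ioc n m, ((j : ℝ) * b j)⁻¹ := by
  have hsub : Ioc n (2 * n) ⊆ Ioc n m := Ioc_subset_Ioc_right hm
  have hn1 : n + 1 ∈ Ioc n (2 * n) := mem_Ioc.2 ⟨by omega, by omega⟩
  have hB : 0 < B := (hpos _ (hsub hn1)).trans_le (hle _ hn1)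
  calc (2 * B)⁻¹ = ∑ _j ∈ Ioc n (2 * n), ((2 * n : ℝ) * B)⁻¹ := by
        rw [sum_const, Nat.card_Ioc, nsmul_eq_mul, show 2 * n - n = n by omega]
        field_simp
    _ ≤ ∑ j ∈ Ioc n (2 * n), ((j : ℝ) * b j)⁻¹ := by
        refine sum_le_sum fun j hj => ?_
        have hj0 : (0 : ℝ) < j := Nat.cast_pos.2 (by have := (mem_Ioc.1 hj).1; omega)
        have hj2 : (j : ℝ) ≤ 2 * n := by exact_mod_cast (mem_Ioc.1 hj).2
        have hbj := hpos j (hsub hj)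
        exact inv_anti₀ (by positivity) (mul_le_mul hj2 (hle j hj) hbj.le (by positivity))
    _ ≤ ∑ j ∈ Ioc n m, ((j : ℝ) * b j)⁻¹ :=
        sum_le_sum_of_subset_of_nonneg hsub fun j hj _ =>
          inv_nonneg.2 (mul_nonneg j.cast_nonneg (hpos j hj).le)

lemma sum_Ioc_ite_mem_Icc {d : ℕ → ℝ} {n m k : ℕ} (hd : ∀ j ∈ Ioc n m, 0 ≤ d j) :
    ∑ j ∈ Ioc n k, (if j ≤ m then d j else 0) ∈ Set.Icc 0 (∑ j ∈ Ioc n m, d j) := by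
  have hsub : {j ∈ Ioc n k | j ≤ m} ⊆ Ioc n m := fun j hj => by
    simp only [mem_filter, mem_Ioc] at hj ⊢
    omega
  rw [← sum_filter]
  exact ⟨sum_nonneg fun j hj => hd j (hsub hj),
    sum_le_sum_of_subset_of_nonneg hsub fun j hj _ => hd j hj⟩

lemma TInv.coc_mul_sum_inv_le {A : ℕ → X →L[ℝ] X} {N : ℕ → X → ℝ} {Z : Set X} {κ : ℝ}
    (hinv : TInv A N Z κ) (hN : NormFamily N) (hZ : (0 : X) ∈ Z) {m n : ℕ} (hn : 1 ≤ n)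
    (hnm : n ≤ m) {x : X} (hx : x ∈ Xs A N n) (hne : coc A n m x ≠ 0) :
    N m (coc A n m x) * ∑ j ∈ Ioc n m, ((j : ℝ) * N j (coc A n j x))⁻¹ ≤ κ := by
  set b : ℕ → ℝ := fun j => N j (coc A n j x)
  have hb : ∀ j, n ≤ j → j ≤ m → 0 < b j := fun j hnj hjm =>
    hN.pos (hn.trans hnj) (coc_apply_ne_zero_of_le A hne hnj hjm)
  set σ := ∑ j ∈ Ioc n m, ((j : ℝ) * b j)⁻¹
  set c : ℕ → ℝ := fun j => if j ≤ m then ((j : ℝ) * b j)⁻¹ else 0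
  set s : ℕ → ℝ := fun k => ∑ j ∈ Ioc n k, c j
  set xh : ℕ → X := fun k => s k • coc A n k x
  have hs : ∀ k, 0 ≤ s k ∧ s k ≤ σ := fun k => sum_Ioc_ite_mem_Icc fun j hj =>
    inv_nonneg.2 (mul_nonneg j.cast_nonneg (hb j (mem_Ioc.1 hj).1.le (mem_Ioc.1 hj).2).le)
  have hsm : s m = σ := sum_congr rfl fun j hj => if_pos (mem_Ioc.1 hj).2
  obtain ⟨S, hS⟩ := hx
  have hxh : MemY N xh := ⟨σ * S, fun k hk => by
    rcases le_or_gt n k with hnk | hkn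
    · rw [hN.smul hk, abs_of_nonneg (hs k).1]
      exact mul_le_mul (hs k).2 (hS k hnk) (hN.nonneg hk _) ((hs k).1.trans (hs k).2)
    · simp [xh, s, Ioc_eq_empty_of_le hkn.le, hN.map_zero hk,
        mul_nonneg ((hs n).1.trans (hs n).2) ((hN.nonneg hn _).trans (hS n le_rfl))]⟩
  have hT : ∀ k, 1 ≤ k → N k (TOp A xh k) ≤ 1 := by
    intro k hk
    rw [TOp_sum_smul_coc A hn x c k]
    split_ifs with hnk
    · by_cases hkm : k ≤ m
      · have hbk := hb k hnk.le hkm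
        rw [hN.smul hk, show c k = ((k : ℝ) * b k)⁻¹ from if_pos hkm]
        change |(k : ℝ) * ((k : ℝ) * b k)⁻¹| * b k ≤ 1
        rw [mul_inv, ← mul_assoc, mul_inv_cancel₀ (by positivity), one_mul,
          abs_of_pos (inv_pos.2 hbk), inv_mul_cancel₀ hbk.ne']
      · simp [c, hkm, hN.map_zero hk]
    · simp [hN.map_zero hk]
  have hD : MemD A N Z xh := ⟨⟨by simpa [xh, s, Ioc_eq_empty_of_le hn] using hZ, hxh⟩, 1, hT⟩
  have hY0 : MemY0 N (TOp A xh) := ⟨by simp [TOp], 1, hT⟩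
  have key := hinv.2.2 _ xh hY0 hD (fun _ _ => rfl) 1 hT m (hn.trans hnm)
  rw [hN.smul (hn.trans hnm), abs_of_nonneg (hs m).1, hsm, mul_one] at key
  rwa [mul_comm]

theorem stmt9_general (A : ℕ → X →L[ℝ] X) (N : ℕ → X → ℝ)
    (hN : NormFamily N) (Z : Submodule ℝ X)
    (κ : ℝ) (hinv : TInv A N (Z : Set X) κ)
    (M a : ℝ) (hM : 0 < M) (ha : 0 < a) (hgrow : Grow A N M a) :
    ∀ m n, 1 ≤ n → n ≤ m → ∀ x ∈ Xs A N n,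
      N m (coc A n m x) ≤ max (M * (2 : ℝ) ^ a) (M * (2 : ℝ) ^ (a + 1) * κ) * N n x := by
  intro m n hn hnm x hx
  have hNx := hN.nonneg hn x
  rcases eq_or_ne (coc A n m x) 0 with h0 | hne
  · rw [h0, hN.map_zero (hn.trans hnm)]
    exact mul_nonneg (le_max_of_le_left (by positivity)) hNx
  rcases le_or_gt m (2 * n) with hm | hm
  · exact (hgrow.le_of_le_two_mul hN hM.le ha.le hn hnm hm x).trans
      (mul_le_mul_of_nonneg_right (le_max_left _ _) hNx)
  have hb : ∀ j ∈ Ioc n m, 0 < N j (coc A n j x) := fun j hj =>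
    hN.pos (by have := (mem_Ioc.1 hj).1; omega)
      (coc_apply_ne_zero_of_le A hne (mem_Ioc.1 hj).1.le (mem_Ioc.1 hj).2)
  have hlow := inv_two_mul_le_sum_inv hn hm.le hb fun j hj =>
    hgrow.le_of_le_two_mul hN hM.le ha.le hn (mem_Ioc.1 hj).1.le (mem_Ioc.1 hj).2 x
  have hkey := hinv.coc_mul_sum_inv_le hN Z.zero_mem hn hnm hx hne
  have hxpos : 0 < N n x := by
    simpa [coc_self] using hN.pos hn (coc_apply_ne_zero_of_le A hne le_rfl hnm)
  have h2B : 2 * (M * 2 ^ a * N n x) = M * 2 ^ (a + 1) * N n x := by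
    rw [Real.rpow_add_one two_ne_zero]; ring
  have hdiv : N m (coc A n m x) / (M * 2 ^ (a + 1) * N n x) ≤ κ := by
    rw [div_eq_mul_inv, ← h2B]
    exact (mul_le_mul_of_nonneg_left hlow (hN.nonneg (hn.trans hnm) _)).trans hkey
  rw [div_le_iff₀' (by positivity)] at hdiv
  calc N m (coc A n m x) ≤ M * 2 ^ (a + 1) * κ * N n x := by linarith
    _ ≤ _ := mul_le_mul_of_nonneg_right (le_max_right _ _) hNx

/-- if `T_Z` is invertible with `κ = ‖T_Z^{-1}‖` and the growth bound
`‖𝓐(m,n)x‖_m ≤ M(m/n)^a‖x‖_n` (`m ≥ n`) holds, then with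
`L = max{M 2^a, M 2^{a+1} κ}` one has `‖𝓐(m,n)x‖_m ≤ L‖x‖_n` for all `m ≥ n`
and `x ∈ X(n)`. -/
theorem stmt9 [CompleteSpace X] (A : ℕ → X →L[ℝ] X) (N : ℕ → X → ℝ)
    (hN : NormFamily N) (Z : Submodule ℝ X) (hZ : IsClosed (Z : Set X))
    (κ : ℝ) (hκ : 0 ≤ κ) (hinv : TInv A N (Z : Set X) κ)
    (M a : ℝ) (hM : 0 < M) (ha : 0 < a) (hgrow : Grow A N M a) :
    ∀ m n, 1 ≤ n → n ≤ m → ∀ x ∈ Xs A N n,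
      N m (coc A n m x) ≤ max (M * (2 : ℝ) ^ a) (M * (2 : ℝ) ^ (a + 1) * κ) * N n x :=
  stmt9_general A N hN Z κ hinv M a hM ha hgrow
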